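/- arXiv:2309.13880 — 4 statements merged into one kernel-verified Lean document; each statement's English description precedes it below -/
import Mathlib

section
/- Lemma 2.1.1: Let f : ℝ² → [0,∞) be a density satisfying f(z₁, z₂) = f(-z₂, -z₁) for all (z₁, z₂), and let W : ℝ → [0,∞) be even and strictly convex. Fix t ∈ ℝ and λ ≥ 0, and define r_λ(c, t) = ∫ W(s - c) f(s, s + t - λ) ds. Then for every c ∈ ℝ, r_λ(c, t) ≥ r_λ((λ - t)/2, t). -/
open MeasureTheory Set

/-! The density `g s = f s (s + t - λ)` along the line is symmetric about `(λ - t)/2`, by the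
symmetry of `f`. Reflecting `s ↦ (λ - t) - s` therefore turns `r_λ(c, t)` into the same integral
with `W (s - c)` replaced by `W ((λ - t) - s - c)`, and averaging the two forms, convexity and
evenness of `W` give pointwise `2 W (s - (λ - t)/2) ≤ W (s - c) + W ((λ - t) - s - c)`. -/

lemma ConvexOn.two_mul_apply_half_sub_le {W : ℝ → ℝ} (hW : ConvexOn ℝ univ W)
    (hWeven : ∀ x, W x = W (-x)) (x y : ℝ) :
    2 * W ((x - y) / 2) ≤ W x + W y := by
  have h := hW.2 (mem_univ x) (mem_univ (-y)) (by norm_num : (0 : ℝ) ≤ 1 / 2)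
    (by norm_num : (0 : ℝ) ≤ 1 / 2) (by norm_num)
  have hmid : (1 / 2 : ℝ) • x + (1 / 2 : ℝ) • -y = (x - y) / 2 := by
    simp only [smul_eq_mul]; ring
  rw [hmid, ← hWeven y] at h
  simp only [smul_eq_mul] at h
  linarith

section Reflection

variable {g : ℝ → ℝ} {a : ℝ}

lemma integral_mul_comp_sub_left_eq_of_symm (hg : ∀ s, g (a - s) = g s) (h : ℝ → ℝ) :
    ∫ s, h (a - s) * g s = ∫ s, h s * g s := by
  simpa only [hg] using integral_sub_left_eq_self (fun s => h s * g s) volume a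

lemma MeasureTheory.Integrable.mul_comp_sub_left_of_symm (hg : ∀ s, g (a - s) = g s) {h : ℝ → ℝ}
    (hi : Integrable (fun s => h s * g s)) :
    Integrable (fun s => h (a - s) * g s) := by
  simpa only [hg] using hi.comp_sub_left a

theorem integral_comp_sub_half_mul_le_of_symm {W : ℝ → ℝ} (hW : ConvexOn ℝ univ W)
    (hWeven : ∀ x, W x = W (-x)) (hg0 : ∀ s, 0 ≤ g s) (hg : ∀ s, g (a - s) = g s) (c : ℝ)
    (hmid : Integrable (fun s => W (s - a / 2) * g s))
    (hc : Integrable (fun s => W (s - c) * g s)) :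
    ∫ s, W (s - a / 2) * g s ≤ ∫ s, W (s - c) * g s := by
  have hc' : Integrable (fun s => W (a - s - c) * g s) :=
    hc.mul_comp_sub_left_of_symm (h := fun s => W (s - c)) hg
  have hpt : ∀ s, 2 * (W (s - a / 2) * g s) ≤ W (s - c) * g s + W (a - s - c) * g s := by
    intro s
    have hW2 := hW.two_mul_apply_half_sub_le hWeven (s - c) (a - s - c)
    rw [show (s - c - (a - s - c)) / 2 = s - a / 2 by ring] at hW2
    nlinarith [hg0 s]
  have hint : ∫ s, 2 * (W (s - a / 2) * g s) ≤ ∫ s, (W (s - c) * g s + W (a - s - c) * g s) :=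
    integral_mono (hmid.const_mul 2) (hc.add hc') hpt
  rw [integral_const_mul, integral_add hc hc',
    integral_mul_comp_sub_left_eq_of_symm (h := fun s => W (s - c)) hg] at hint
  linarith

end Reflection

theorem lemma_2_1_1_general (f : ℝ → ℝ → ℝ) (W : ℝ → ℝ)
    (hfnonneg : ∀ z₁ z₂ : ℝ, 0 ≤ f z₁ z₂)
    (hfsym : ∀ z₁ z₂ : ℝ, f z₁ z₂ = f (-z₂) (-z₁))
    (hWeven : ∀ x : ℝ, W x = W (-x))
    (hWconv : StrictConvexOn ℝ Set.univ W)
    (t lam : ℝ)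
    (hint : ∀ c : ℝ, Integrable (fun s : ℝ => W (s - c) * f s (s + t - lam))) :
    ∀ c : ℝ,
      (∫ s : ℝ, W (s - (lam - t) / 2) * f s (s + t - lam)) ≤
        ∫ s : ℝ, W (s - c) * f s (s + t - lam) := by
  have hsymm : ∀ s, f (lam - t - s) (lam - t - s + t - lam) = f s (s + t - lam) := by
    intro s
    rw [hfsym s (s + t - lam)]
    congr 1 <;> ring
  exact fun c => integral_comp_sub_half_mul_le_of_symm hWconv.convexOn hWeven
    (fun s => hfnonneg _ _) hsymm c (hint _) (hint c)

/-- Lemma 2.1.1: for a bivariate density `f` with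
`f z₁ z₂ = f (-z₂) (-z₁)` and an even strictly convex loss `W`, the function
`c ↦ r_λ(c,t) = ∫ W (s - c) * f s (s + t - λ)` is minimized at `c = (λ - t)/2`. -/
theorem lemma_2_1_1 (f : ℝ → ℝ → ℝ) (W : ℝ → ℝ)
    (hfnonneg : ∀ z₁ z₂ : ℝ, 0 ≤ f z₁ z₂)
    (hfsym : ∀ z₁ z₂ : ℝ, f z₁ z₂ = f (-z₂) (-z₁))
    (hWnonneg : ∀ x : ℝ, 0 ≤ W x)
    (hW0 : W 0 = 0)
    (hWeven : ∀ x : ℝ, W x = W (-x))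
    (hWconv : StrictConvexOn ℝ Set.univ W)
    (t lam : ℝ) (hlam : 0 ≤ lam)
    (hint : ∀ c : ℝ, Integrable (fun s : ℝ => W (s - c) * f s (s + t - lam))) :
    ∀ c : ℝ,
      (∫ s : ℝ, W (s - (lam - t) / 2) * f s (s + t - lam)) ≤
        ∫ s : ℝ, W (s - c) * f s (s + t - lam) :=
  lemma_2_1_1_general f W hfnonneg hfsym hWeven hWconv t lam hint
end

section
/- Monotone likelihood ratio preservation (Lemma 2.2.2, part 1): Let f : ℝ² → (0,∞) and suppose that for every Δ ≥ 0 and t ∈ ℝ, the ratio s ↦ f(s, s+t-Δ)/f(s, s+t) is nondecreasing in s. Then for every Δ ≥ 0 and t ∈ ℝ, the ratio s ↦ (∫_{-∞}^{t-Δ} f(s, s+y) dy) / (∫_{-∞}^{t} f(s, s+y) dy) is nondecreasing in s. -/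
/-!
Splitting the tail at `t - Δ`, the ratio is `A / (A + C)` with `A` the integral over `y ≤ t - Δ`
and `C` the one over `t - Δ < y ≤ t`, so it is nondecreasing in `s` iff `A(s₁) C(s₂) ≤ A(s₂) C(s₁)`
for `s₁ ≤ s₂`. The MLR hypothesis says exactly that `(s, y) ↦ f s (s + y)` is totally positive of
order two, i.e. this product inequality holds pointwise for `a ≤ b`, and integrating it over
`a ≤ t - Δ < b ≤ t` gives the claim.
-/

open MeasureTheory Set

theorem mul_le_mul_of_monotone_div {f : ℝ → ℝ → ℝ} (hfpos : ∀ z₁ z₂, 0 < f z₁ z₂)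
    (hmlr : ∀ Δ : ℝ, 0 ≤ Δ → ∀ t : ℝ, Monotone fun s : ℝ => f s (s + t - Δ) / f s (s + t))
    {s₁ s₂ : ℝ} (hs : s₁ ≤ s₂) {a b : ℝ} (hab : a ≤ b) :
    f s₁ (s₁ + a) * f s₂ (s₂ + b) ≤ f s₂ (s₂ + a) * f s₁ (s₁ + b) := by
  have h := hmlr (b - a) (sub_nonneg.mpr hab) b hs
  have hshift : ∀ s : ℝ, s + b - (b - a) = s + a := fun s => by ring
  simp only [hshift] at h
  rwa [div_le_div_iff₀ (hfpos _ _) (hfpos _ _)] at h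

theorem setIntegral_mul_setIntegral_le {β : Type*} [MeasurableSpace β] {μ : Measure β}
    {p q : β → ℝ} {S T : Set β} (hS : MeasurableSet S) (hT : MeasurableSet T)
    (hpS : IntegrableOn p S μ) (hqS : IntegrableOn q S μ)
    (hpT : IntegrableOn p T μ) (hqT : IntegrableOn q T μ)
    (h : ∀ a ∈ S, ∀ b ∈ T, p a * q b ≤ q a * p b) :
    (∫ a in S, p a ∂μ) * (∫ b in T, q b ∂μ) ≤ (∫ a in S, q a ∂μ) * ∫ b in T, p b ∂μ := by
  have inner : ∀ a ∈ S, p a * ∫ b in T, q b ∂μ ≤ q a * ∫ b in T, p b ∂μ := fun a ha => by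
    rw [← integral_const_mul, ← integral_const_mul]
    exact setIntegral_mono_on (hqT.const_mul _) (hpT.const_mul _) hT (h a ha)
  rw [← integral_mul_const, ← integral_mul_const]
  exact setIntegral_mono_on (hpS.mul_const _) (hqS.mul_const _) hS inner

theorem div_add_le_div_add_of_mul_le_mul {A₁ A₂ C₁ C₂ : ℝ} (h₁ : 0 < A₁ + C₁) (h₂ : 0 < A₂ + C₂)
    (h : A₁ * C₂ ≤ A₂ * C₁) : A₁ / (A₁ + C₁) ≤ A₂ / (A₂ + C₂) := by
  rw [div_le_div_iff₀ h₁ h₂]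
  linarith

theorem setIntegral_Iic_eq_add {g : ℝ → ℝ} {u t : ℝ} (hut : u ≤ t) (hg : IntegrableOn g (Iic t)) :
    ∫ y in Iic t, g y = (∫ y in Iic u, g y) + ∫ y in Ioc u t, g y := by
  rw [← Iic_union_Ioc_eq_Iic hut, setIntegral_union (Iic_disjoint_Ioc le_rfl) measurableSet_Ioc
    (hg.mono_set (Iic_subset_Iic.mpr hut)) (hg.mono_set Ioc_subset_Iic_self)]

theorem mlr_preserved_tail_general (f : ℝ → ℝ → ℝ)
    (hfpos : ∀ z₁ z₂ : ℝ, 0 < f z₁ z₂)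
    (htail_int : ∀ s t : ℝ, IntegrableOn (fun y : ℝ => f s (s + y)) (Set.Iic t))
    (htail_pos : ∀ s t : ℝ, 0 < ∫ y in Set.Iic t, f s (s + y))
    (hmlr : ∀ Δ : ℝ, 0 ≤ Δ → ∀ t : ℝ,
      Monotone fun s : ℝ => f s (s + t - Δ) / f s (s + t)) :
    ∀ Δ : ℝ, 0 ≤ Δ → ∀ t : ℝ,
      Monotone fun s : ℝ =>
        (∫ y in Set.Iic (t - Δ), f s (s + y)) / ∫ y in Set.Iic t, f s (s + y) := by
  intro Δ hΔ t s₁ s₂ hs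
  have hsplit : t - Δ ≤ t := sub_le_self t hΔ
  have hpos : ∀ s, 0 < ∫ y in Iic t, f s (s + y) := (htail_pos · t)
  simp only [setIntegral_Iic_eq_add hsplit (htail_int _ t)] at hpos ⊢
  refine div_add_le_div_add_of_mul_le_mul (hpos s₁) (hpos s₂) ?_
  exact setIntegral_mul_setIntegral_le measurableSet_Iic measurableSet_Ioc
    (htail_int s₁ _) (htail_int s₂ _)
    ((htail_int s₁ t).mono_set Ioc_subset_Iic_self) ((htail_int s₂ t).mono_set Ioc_subset_Iic_self)
    fun a ha b hb => mul_le_mul_of_monotone_div hfpos hmlr hs (ha.trans hb.1.le)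

/-- Lemma 2.2.2, part 1: the monotone likelihood ratio property
is preserved by tail integration. -/
theorem mlr_preserved_tail (f : ℝ → ℝ → ℝ)
    (hfpos : ∀ z₁ z₂ : ℝ, 0 < f z₁ z₂)
    (hfmeas : Measurable (Function.uncurry f))
    (htail_int : ∀ s t : ℝ, IntegrableOn (fun y : ℝ => f s (s + y)) (Set.Iic t))
    (htail_pos : ∀ s t : ℝ, 0 < ∫ y in Set.Iic t, f s (s + y))
    (hmlr : ∀ Δ : ℝ, 0 ≤ Δ → ∀ t : ℝ,
      Monotone fun s : ℝ => f s (s + t - Δ) / f s (s + t)) :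
    ∀ Δ : ℝ, 0 ≤ Δ → ∀ t : ℝ,
      Monotone fun s : ℝ =>
        (∫ y in Set.Iic (t - Δ), f s (s + y)) / ∫ y in Set.Iic t, f s (s + y) :=
  mlr_preserved_tail_general f hfpos htail_int htail_pos hmlr
end

section
/- Lemma 2.2.2, part 2: Let f : ℝ² → (0,∞) and suppose that for every Δ ≥ 0 and t ∈ ℝ, the ratio s ↦ f(s, s+t-Δ)/f(s, s+t) is nondecreasing in s. Then for every t ∈ ℝ, the hazard-type ratio s ↦ f(s, s+t) / ∫_{-∞}^{t} f(s, s+y) dy is nonincreasing in s. -/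
/-!
Dividing the tail integral by `f s (s + t)` turns it into `∫_{y ≤ t} f s (s + y) / f s (s + t) dy`,
whose integrand is nondecreasing in `s` for each `y ≤ t` by the MLR assumption with `Δ = t - y`.
Hence this normalised tail is nondecreasing, and the hazard ratio is its reciprocal.
-/

open MeasureTheory Set

lemma monotone_setIntegral_div {α : Type*} [MeasurableSpace α] {μ : Measure α} {S : Set α}
    (hS : MeasurableSet S) (g : ℝ → α → ℝ) (c : ℝ → ℝ) (hg : ∀ s, IntegrableOn (g s) S μ)
    (hmono : ∀ y ∈ S, Monotone fun s => g s y / c s) :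
    Monotone fun s => (∫ y in S, g s y ∂μ) / c s := by
  intro s₁ s₂ hs
  simp only [← integral_div]
  exact setIntegral_mono_on ((hg s₁).div_const _) ((hg s₂).div_const _) hS
    fun y hy => hmono y hy hs

theorem hazard_ratio_antitone_general (f : ℝ → ℝ → ℝ)
    (hfpos : ∀ z₁ z₂ : ℝ, 0 < f z₁ z₂)
    (htail_int : ∀ s t : ℝ, IntegrableOn (fun y : ℝ => f s (s + y)) (Set.Iic t))
    (htail_pos : ∀ s t : ℝ, 0 < ∫ y in Set.Iic t, f s (s + y))
    (hmlr : ∀ Δ : ℝ, 0 ≤ Δ → ∀ t : ℝ,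
      Monotone fun s : ℝ => f s (s + t - Δ) / f s (s + t)) :
    ∀ t : ℝ,
      Antitone fun s : ℝ => f s (s + t) / ∫ y in Set.Iic t, f s (s + y) := by
  intro t
  have hmono_tail : Monotone fun s => (∫ y in Iic t, f s (s + y)) / f s (s + t) := by
    refine monotone_setIntegral_div measurableSet_Iic (fun s y => f s (s + y)) _
      (fun s => htail_int s t) fun y hy => ?_
    convert hmlr (t - y) (sub_nonneg.2 hy) t using 5
    ring
  intro s₁ s₂ hs
  simpa only [inv_div] using
    inv_anti₀ (div_pos (htail_pos s₁ t) (hfpos s₁ (s₁ + t))) (hmono_tail hs)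

/-- Lemma 2.2.2, part 2: under the MLR assumption, the
hazard-type ratio `s ↦ f s (s+t) / ∫_{-∞}^{t} f s (s+y) dy` is nonincreasing. -/
theorem hazard_ratio_antitone (f : ℝ → ℝ → ℝ)
    (hfpos : ∀ z₁ z₂ : ℝ, 0 < f z₁ z₂)
    (hfmeas : Measurable (Function.uncurry f))
    (htail_int : ∀ s t : ℝ, IntegrableOn (fun y : ℝ => f s (s + y)) (Set.Iic t))
    (htail_pos : ∀ s t : ℝ, 0 < ∫ y in Set.Iic t, f s (s + y))
    (hmlr : ∀ Δ : ℝ, 0 ≤ Δ → ∀ t : ℝ,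
      Monotone fun s : ℝ => f s (s + t - Δ) / f s (s + t)) :
    ∀ t : ℝ,
      Antitone fun s : ℝ => f s (s + t) / ∫ y in Set.Iic t, f s (s + y) :=
  hazard_ratio_antitone_general f hfpos htail_int htail_pos hmlr
end

section
/- For the bivariate normal model with common variance σ² and correlation ρ, the Brewster–Zidek solution under squared error loss W(t) = t² is explicit: the unique solution c of ∫_{-∞}^{∞} ∫_{-∞}^{t} (s - c) f(s, s+y) dy ds = 0, where f is the centered BVN(0,0,σ²,σ²,ρ) density, is c = (τ/2)·φ(t/τ)/Φ(t/τ) with τ = σ√(2(1-ρ)), where φ and Φ are the standard normal pdf and cdf. -/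
open MeasureTheory Set

/-- The centered bivariate normal density with common variance `σ²` and
correlation `ρ`. -/
noncomputable def bvnDensity (σ ρ : ℝ) (z₁ z₂ : ℝ) : ℝ :=
  (2 * Real.pi * σ ^ 2 * Real.sqrt (1 - ρ ^ 2))⁻¹ *
    Real.exp (-(z₁ ^ 2 - 2 * ρ * z₁ * z₂ + z₂ ^ 2) / (2 * (1 - ρ ^ 2) * σ ^ 2))

/-- The standard normal pdf. -/
noncomputable def stdNormalPdf (x : ℝ) : ℝ :=
  Real.exp (-x ^ 2 / 2) / Real.sqrt (2 * Real.pi)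

/-- The standard normal cdf. -/
noncomputable def stdNormalCdf (x : ℝ) : ℝ :=
  ∫ y in Set.Iic x, stdNormalPdf y

/-!
Substituting `z₂ = s + y`, the density factors as `N(s; -y/2, (1+ρ)σ²/2) · N(y; 0, τ²)`: the
conditional law of `Z₁` given `Z = Z₂ - Z₁ = y`, times the law of `Z`. Integrating in `s` first
therefore leaves `(-y/2 - c) · N(y; 0, τ²)`, and since `∫_{y ≤ t} y N(y; 0, τ²) dy = -τ φ(t/τ)`,
the double integral equals `(τ/2) φ(t/τ) - c Φ(t/τ)`, an affine function of `c` with slope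
`-Φ(t/τ) < 0`. Fubini is justified by the other factorization
`N(s; 0, σ²) · N(y; -(1-ρ)s, (1-ρ²)σ²)`, whose second factor integrates to at most one.
-/

open ProbabilityTheory Real
open scoped NNReal

lemma integrable_prod_mul_of_integral_le_one {α β : Type*} [MeasurableSpace α]
    [MeasurableSpace β] {μ : Measure α} {ν : Measure β} [SFinite ν] {g : α → ℝ}
    {K : α → β → ℝ} (hg : Integrable g μ)
    (hm : AEStronglyMeasurable (fun p : α × β ↦ g p.1 * K p.1 p.2) (μ.prod ν))
    (hK₀ : ∀ x y, 0 ≤ K x y) (hK : ∀ x, Integrable (K x) ν) (hK₁ : ∀ x, ∫ y, K x y ∂ν ≤ 1) :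
    Integrable (fun p : α × β ↦ g p.1 * K p.1 p.2) (μ.prod ν) := by
  rw [integrable_prod_iff hm]
  refine ⟨ae_of_all _ fun x ↦ (hK x).const_mul (g x),
    hg.norm.mono' hm.norm.integral_prod_right' (ae_of_all _ fun x ↦ ?_)⟩
  simp_rw [norm_mul, Real.norm_of_nonneg (hK₀ x _)]
  rw [integral_const_mul,
    Real.norm_of_nonneg (mul_nonneg (norm_nonneg _) (integral_nonneg (hK₀ x)))]
  exact mul_le_of_le_one_right (norm_nonneg _) (hK₁ x)

namespace ProbabilityTheory

variable {v : ℝ≥0}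

lemma integrable_mul_gaussianPDFReal (m : ℝ) (v : ℝ≥0) :
    Integrable fun x ↦ x * gaussianPDFReal m v x := by
  by_cases hv : v = 0
  · simp [hv]
  have h := (memLp_id_gaussianReal (μ := m) (v := v) 1).integrable le_rfl
  rw [gaussianReal_of_var_ne_zero _ hv, integrable_withDensity_iff_integrable_smul'
    (measurable_gaussianPDF m v) (ae_of_all _ fun _ ↦ gaussianPDF_lt_top)] at h
  simpa [toReal_gaussianPDF, mul_comm] using h

lemma integrable_sub_mul_gaussianPDFReal (m c : ℝ) (v : ℝ≥0) :
    Integrable fun x ↦ (x - c) * gaussianPDFReal m v x := by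
  simpa only [sub_mul] using (integrable_mul_gaussianPDFReal m v).sub'
    ((integrable_gaussianPDFReal m v).const_mul c)

lemma integral_mul_gaussianPDFReal (m : ℝ) (hv : v ≠ 0) :
    ∫ x, x * gaussianPDFReal m v x = m := by
  have h : ∫ x, x ∂gaussianReal m v = m := integral_id_gaussianReal
  simpa only [integral_gaussianReal_eq_integral_smul hv, smul_eq_mul, mul_comm] using h

lemma integral_sub_mul_gaussianPDFReal (m c : ℝ) (hv : v ≠ 0) :
    ∫ x, (x - c) * gaussianPDFReal m v x = m - c := by
  simp_rw [sub_mul]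
  rw [integral_sub (integrable_mul_gaussianPDFReal m v)
    ((integrable_gaussianPDFReal m v).const_mul c), integral_mul_gaussianPDFReal m hv,
    integral_const_mul, integral_gaussianPDFReal_eq_one m hv, mul_one]

lemma hasDerivAt_gaussianPDFReal (m : ℝ) (v : ℝ≥0) (x : ℝ) :
    HasDerivAt (gaussianPDFReal m v) (-((x - m) / v) * gaussianPDFReal m v x) x := by
  have h := ((((hasDerivAt_id' x).sub_const m).pow 2).neg.div_const (2 * (v : ℝ))).exp.const_mul
    (√(2 * π * v))⁻¹
  refine h.congr_deriv ?_
  by_cases hv : (v : ℝ) = 0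
  · simp [hv]
  · simp only [gaussianPDFReal, Pi.pow_apply, Pi.neg_apply]
    field_simp
    ring

lemma setIntegral_Iic_sub_mul_gaussianPDFReal (m : ℝ) (hv : v ≠ 0) (t : ℝ) :
    ∫ x in Iic t, (x - m) * gaussianPDFReal m v x = -v * gaussianPDFReal m v t := by
  have hv' : (v : ℝ) ≠ 0 := by exact_mod_cast hv
  have hderiv (x : ℝ) (_ : x ∈ Iic t) :=
    ((hasDerivAt_gaussianPDFReal m v x).const_mul (-(v : ℝ)))
  have hint : Integrable fun x ↦ -(v : ℝ) * (-((x - m) / v) * gaussianPDFReal m v x) :=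
    (integrable_sub_mul_gaussianPDFReal m m v).congr (ae_of_all _ fun x ↦ by field_simp)
  have hlim := tendsto_zero_of_hasDerivAt_of_integrableOn_Iic hderiv hint.integrableOn
    ((integrable_gaussianPDFReal m v).const_mul _).integrableOn
  rw [← sub_zero (-(v : ℝ) * _), ← integral_Iic_of_hasDerivAt_of_tendsto' hderiv
    hint.integrableOn hlim]
  congr with x
  field_simp

end ProbabilityTheory

lemma stdNormalPdf_eq_gaussianPDFReal : stdNormalPdf = gaussianPDFReal 0 1 := by
  ext x
  simp [stdNormalPdf, gaussianPDFReal, div_eq_inv_mul]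

lemma gaussianPDFReal_zero_sq {τ : ℝ} (hτ : 0 < τ) (x : ℝ) :
    gaussianPDFReal 0 (τ ^ 2).toNNReal x = stdNormalPdf (x / τ) / τ := by
  rw [stdNormalPdf_eq_gaussianPDFReal, div_eq_inv_mul x, gaussianPDFReal_inv_mul hτ.ne']
  simp [abs_of_pos hτ, hτ.ne', Real.toNNReal_of_nonneg (sq_nonneg τ)]

lemma setIntegral_Iic_comp_div {E : Type*} [NormedAddCommGroup E] [NormedSpace ℝ E]
    (f : ℝ → E) {τ : ℝ} (hτ : 0 < τ) (t : ℝ) :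
    ∫ y in Iic t, f (y / τ) = τ • ∫ y in Iic (t / τ), f y := by
  have h := Measure.integral_comp_div ((Iic (t / τ)).indicator f) τ
  rw [abs_of_pos hτ] at h
  rw [← integral_indicator measurableSet_Iic, ← integral_indicator measurableSet_Iic, ← h]
  congr with y
  simp only [indicator_apply, mem_Iic, div_le_div_iff_of_pos_right hτ]

lemma setIntegral_Iic_gaussianPDFReal_zero_sq {τ : ℝ} (hτ : 0 < τ) (t : ℝ) :
    ∫ y in Iic t, gaussianPDFReal 0 (τ ^ 2).toNNReal y = stdNormalCdf (t / τ) := by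
  simp_rw [gaussianPDFReal_zero_sq hτ]
  rw [integral_div, setIntegral_Iic_comp_div _ hτ, smul_eq_mul, mul_div_cancel_left₀ _ hτ.ne',
    stdNormalCdf]

lemma setIntegral_Iic_mul_gaussianPDFReal_zero_sq {τ : ℝ} (hτ : 0 < τ) (t : ℝ) :
    ∫ y in Iic t, y * gaussianPDFReal 0 (τ ^ 2).toNNReal y = -τ * stdNormalPdf (t / τ) := by
  have h := setIntegral_Iic_sub_mul_gaussianPDFReal 0 (v := (τ ^ 2).toNNReal)
    (by simpa using hτ.ne') t
  simp only [sub_zero] at h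
  rw [h, gaussianPDFReal_zero_sq hτ, Real.coe_toNNReal _ (sq_nonneg τ)]
  field_simp

lemma stdNormalCdf_pos (x : ℝ) : 0 < stdNormalCdf x := by
  rw [stdNormalCdf, stdNormalPdf_eq_gaussianPDFReal,
    setIntegral_pos_iff_support_of_nonneg_ae (ae_of_all _ (gaussianPDFReal_nonneg 0 1))
    (integrable_gaussianPDFReal 0 1).integrableOn,
    Function.support_eq_univ fun y ↦ (gaussianPDFReal_pos 0 1 y one_ne_zero).ne']
  simp

lemma gaussianPDFReal_mul_gaussianPDFReal (m₁ m₂ : ℝ) (v₁ v₂ : ℝ≥0) (x y : ℝ) :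
    gaussianPDFReal m₁ v₁ x * gaussianPDFReal m₂ v₂ y =
      (2 * π * √(v₁ * v₂))⁻¹ * exp (-(x - m₁) ^ 2 / (2 * v₁) - (y - m₂) ^ 2 / (2 * v₂)) := by
  simp only [gaussianPDFReal]
  rw [mul_mul_mul_comm, ← mul_inv, ← Real.sqrt_mul (by positivity), ← exp_add,
    show 2 * π * v₁ * (2 * π * v₂) = (2 * π) ^ 2 * (v₁ * v₂) by ring,
    Real.sqrt_mul (by positivity), sqrt_sq (by positivity)]
  ring_nf

variable {σ ρ : ℝ}

lemma bvnDensity_self_add_eq_cond_mul_diff (hσ : σ ≠ 0) (hρ : ρ ∈ Ioo (-1 : ℝ) 1) (s y : ℝ) :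
    bvnDensity σ ρ s (s + y) =
      gaussianPDFReal (-(y / 2)) ((1 + ρ) * σ ^ 2 / 2).toNNReal s *
        gaussianPDFReal 0 (2 * (1 - ρ) * σ ^ 2).toNNReal y := by
  obtain ⟨hρ₁, hρ₂⟩ := hρ
  have h₁ : 0 < 1 + ρ := by linarith
  have h₂ : 0 < 1 - ρ := by linarith
  have h : 0 < 1 - ρ ^ 2 := by nlinarith
  rw [gaussianPDFReal_mul_gaussianPDFReal, bvnDensity, Real.coe_toNNReal _ (by positivity),
    Real.coe_toNNReal _ (by positivity), show (1 + ρ) * σ ^ 2 / 2 * (2 * (1 - ρ) * σ ^ 2) =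
      (σ ^ 2) ^ 2 * (1 - ρ ^ 2) by ring, Real.sqrt_mul (by positivity), sqrt_sq (by positivity)]
  congr 2
  · ring
  · field_simp
    ring

lemma bvnDensity_self_add_eq_fst_mul_cond (hσ : σ ≠ 0) (hρ : ρ ∈ Ioo (-1 : ℝ) 1) (s y : ℝ) :
    bvnDensity σ ρ s (s + y) =
      gaussianPDFReal 0 (σ ^ 2).toNNReal s *
        gaussianPDFReal (-((1 - ρ) * s)) ((1 - ρ ^ 2) * σ ^ 2).toNNReal y := by
  obtain ⟨hρ₁, hρ₂⟩ := hρ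
  have h : 0 < 1 - ρ ^ 2 := by nlinarith
  rw [gaussianPDFReal_mul_gaussianPDFReal, bvnDensity, Real.coe_toNNReal _ (by positivity),
    Real.coe_toNNReal _ (by positivity), show σ ^ 2 * ((1 - ρ ^ 2) * σ ^ 2) =
      (σ ^ 2) ^ 2 * (1 - ρ ^ 2) by ring, Real.sqrt_mul (by positivity), sqrt_sq (by positivity)]
  congr 2
  · ring
  · field_simp
    ring

lemma integral_integral_Iic_sub_mul_bvnDensity (hσ : 0 < σ) (hρ : ρ ∈ Ioo (-1 : ℝ) 1)
    (t c : ℝ) :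
    ∫ s, ∫ y in Iic t, (s - c) * bvnDensity σ ρ s (s + y) =
      σ * √(2 * (1 - ρ)) / 2 * stdNormalPdf (t / (σ * √(2 * (1 - ρ)))) -
        c * stdNormalCdf (t / (σ * √(2 * (1 - ρ)))) := by
  set τ := σ * √(2 * (1 - ρ)) with hτ_def
  have hτ : 0 < τ := mul_pos hσ (sqrt_pos.2 (by linarith [hρ.2]))
  have hvar : (2 * (1 - ρ) * σ ^ 2).toNNReal = (τ ^ 2).toNNReal := by
    rw [hτ_def, mul_pow, sq_sqrt (by linarith [hρ.2])]
    ring_nf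
  have hint : Integrable (fun p : ℝ × ℝ ↦ (p.1 - c) * bvnDensity σ ρ p.1 (p.1 + p.2))
      (volume.prod (volume.restrict (Iic t))) := by
    simp_rw [bvnDensity_self_add_eq_fst_mul_cond hσ.ne' hρ, ← mul_assoc]
    refine integrable_prod_mul_of_integral_le_one
      (K := fun s y ↦ gaussianPDFReal (-((1 - ρ) * s)) ((1 - ρ ^ 2) * σ ^ 2).toNNReal y)
      (integrable_sub_mul_gaussianPDFReal 0 c (σ ^ 2).toNNReal)
      (by unfold gaussianPDFReal; fun_prop)
      (fun _ _ ↦ gaussianPDFReal_nonneg _ _ _)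
      (fun _ ↦ (integrable_gaussianPDFReal _ _).restrict) fun s ↦ ?_
    refine (setIntegral_le_integral (integrable_gaussianPDFReal _ _)
      (ae_of_all _ (gaussianPDFReal_nonneg _ _))).trans_eq (integral_gaussianPDFReal_eq_one _ ?_)
    exact (Real.toNNReal_pos.2 (mul_pos (by nlinarith [hρ.1, hρ.2]) (pow_pos hσ 2))).ne'
  have hinner (y : ℝ) : ∫ s, (s - c) * bvnDensity σ ρ s (s + y) =
      (-(y / 2) - c) * gaussianPDFReal 0 (τ ^ 2).toNNReal y := by
    simp_rw [bvnDensity_self_add_eq_cond_mul_diff hσ.ne' hρ, hvar, ← mul_assoc]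
    rw [integral_mul_const, integral_sub_mul_gaussianPDFReal _ _
      (Real.toNNReal_pos.2 (by nlinarith [hρ.1, pow_pos hσ 2])).ne']
  rw [integral_integral_swap hint]
  simp_rw [hinner, sub_mul, neg_mul, div_mul_eq_mul_div]
  rw [integral_sub (by exact ((integrable_mul_gaussianPDFReal 0 _).div_const 2).neg.restrict)
      (by exact ((integrable_gaussianPDFReal 0 _).const_mul c).restrict), integral_neg,
    integral_div, integral_const_mul, setIntegral_Iic_mul_gaussianPDFReal_zero_sq hτ,
    setIntegral_Iic_gaussianPDFReal_zero_sq hτ]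
  ring

/-- for the bivariate normal model under squared error loss, the
unique Brewster–Zidek solution of `∫∫_{y ≤ t} (s - c) f(s, s+y) dy ds = 0` is
`c = (τ/2) φ(t/τ)/Φ(t/τ)` with `τ = σ√(2(1-ρ))`. -/
theorem bz_solution_normal (σ ρ t : ℝ) (hσ : 0 < σ) (hρ : ρ ∈ Set.Ioo (-1 : ℝ) 1) :
    (∫ s : ℝ, ∫ y in Set.Iic t,
        (s - σ * Real.sqrt (2 * (1 - ρ)) / 2 *
            stdNormalPdf (t / (σ * Real.sqrt (2 * (1 - ρ)))) /
            stdNormalCdf (t / (σ * Real.sqrt (2 * (1 - ρ))))) *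
          bvnDensity σ ρ s (s + y)) = 0 ∧
      ∀ c : ℝ,
        (∫ s : ℝ, ∫ y in Set.Iic t, (s - c) * bvnDensity σ ρ s (s + y)) = 0 →
          c = σ * Real.sqrt (2 * (1 - ρ)) / 2 *
              stdNormalPdf (t / (σ * Real.sqrt (2 * (1 - ρ)))) /
              stdNormalCdf (t / (σ * Real.sqrt (2 * (1 - ρ)))) := by
  have hΦ := (stdNormalCdf_pos (t / (σ * √(2 * (1 - ρ))))).ne'
  refine ⟨?_, fun c hc ↦ ?_⟩
  · rw [integral_integral_Iic_sub_mul_bvnDensity hσ hρ, div_mul_cancel₀ _ hΦ, sub_self]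
  · rw [integral_integral_Iic_sub_mul_bvnDensity hσ hρ, sub_eq_zero] at hc
    rw [eq_div_iff hΦ, ← hc]
end
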